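/- (Equilibrium growth rates of the stochastic logistic equation.) Let k > 0, θ > 0, r > 0. Let X be a real random variable distributed as Gamma(k, θ), and let ε be a square-integrable real random variable independent of X with E[ε] = 1 and Var(ε) = v. Set Y = r·X·(1−X)·ε. If E[Y] = E[X] = kθ and Var(Y) = Var(X) = kθ², then r = (2k + 4 + (k + 1)·√((1 − v(k + 2))/(v + 1)))/(k + 3) or r = (2k + 4 − (k + 1)·√((1 − v(k + 2))/(v + 1)))/(k + 3). -/

import Mathlib

/-!
Tilting the Gamma(k, θ) density by `xⁿ` gives `k(k+1)⋯(k+n-1) θⁿ` times the Gamma(k+n, θ)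
density, so the moments of `X` are rising factorials. By independence, `E[Y] = r E[X(1-X)]` and
`E[Y²] = r² (v+1) E[X²(1-X)²]`, and the two equilibrium conditions reduce to
`r (1 - (k+1)θ) = 1` and `r² (v+1) (1 - 2(k+2)θ + (k+2)(k+3)θ²) = 1`. Eliminating
`(k+1)θ = (r-1)/r` leaves `((k+3) r - (2k+4))² (v+1) = (k+1)² (1 - v(k+2))`, whose roots are the
two growth rates.
-/

open MeasureTheory ProbabilityTheory Real

lemma Real.Gamma_add_nat_eq_eval_ascPochhammer_mul {a : ℝ} (ha : 0 < a) (n : ℕ) :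
    Gamma (a + n) = (ascPochhammer ℝ n).eval a * Gamma a := by
  induction n with
  | zero => simp
  | succ n ih =>
    rw [Nat.cast_succ, ← add_assoc, Gamma_add_one (by positivity), ih, ascPochhammer_succ_eval]
    ring

namespace ProbabilityTheory

section GammaMoments

variable {a r : ℝ}

lemma gammaPDFReal_mul_pow (ha : 0 < a) (hr : 0 < r) (n : ℕ) (x : ℝ) :
    gammaPDFReal a r x * x ^ n
      = (ascPochhammer ℝ n).eval a / r ^ n * gammaPDFReal (a + n) r x := by
  rcases lt_trichotomy x 0 with hx | rfl | hx
  · simp [gammaPDFReal, hx.not_ge]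
  · cases n with
    | zero => simp
    | succ n =>
      have : 0 < a + (n + 1 : ℝ) - 1 := by linarith [n.cast_nonneg (α := ℝ)]
      simp [gammaPDFReal, zero_rpow this.ne']
  · have hΓ := Gamma_pos_of_pos ha
    have hP := ascPochhammer_pos n a ha
    simp only [gammaPDFReal, if_pos hx.le]
    rw [Gamma_add_nat_eq_eval_ascPochhammer_mul ha, rpow_add hr, rpow_natCast,
      add_sub_right_comm, rpow_add hx, rpow_natCast]
    field_simp

lemma measurable_gammaPDF : Measurable (gammaPDF a r) :=
  (measurable_gammaPDFReal a r).ennreal_ofReal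

lemma integral_gammaMeasure (ha : 0 < a) (hr : 0 < r) (f : ℝ → ℝ) :
    ∫ x, f x ∂gammaMeasure a r = ∫ x, gammaPDFReal a r x * f x := by
  rw [gammaMeasure, integral_withDensity_eq_integral_toReal_smul measurable_gammaPDF
    (ae_of_all _ fun _ ↦ ENNReal.ofReal_lt_top)]
  simp [gammaPDF, ENNReal.toReal_ofReal (gammaPDFReal_nonneg ha hr _)]

lemma integrable_gammaMeasure_iff (ha : 0 < a) (hr : 0 < r) {f : ℝ → ℝ} :
    Integrable f (gammaMeasure a r) ↔ Integrable fun x ↦ gammaPDFReal a r x * f x := by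
  rw [gammaMeasure, integrable_withDensity_iff_integrable_smul' measurable_gammaPDF
    (ae_of_all _ fun _ ↦ ENNReal.ofReal_lt_top)]
  simp [gammaPDF, ENNReal.toReal_ofReal (gammaPDFReal_nonneg ha hr _)]

lemma integrable_gammaPDFReal (ha : 0 < a) (hr : 0 < r) : Integrable (gammaPDFReal a r) := by
  have := isProbabilityMeasure_gammaMeasure ha hr
  simpa using (integrable_gammaMeasure_iff ha hr (f := 1)).1 (integrable_const 1)

lemma integral_gammaPDFReal (ha : 0 < a) (hr : 0 < r) : ∫ x, gammaPDFReal a r x = 1 := by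
  have := isProbabilityMeasure_gammaMeasure ha hr
  simpa using (integral_gammaMeasure ha hr 1).symm

lemma integrable_pow_gammaMeasure (ha : 0 < a) (hr : 0 < r) (n : ℕ) :
    Integrable (fun x ↦ x ^ n) (gammaMeasure a r) := by
  simp_rw [integrable_gammaMeasure_iff ha hr, gammaPDFReal_mul_pow ha hr]
  exact (integrable_gammaPDFReal (by positivity) hr).const_mul _

lemma integral_pow_gammaMeasure (ha : 0 < a) (hr : 0 < r) (n : ℕ) :
    ∫ x, x ^ n ∂gammaMeasure a r = (ascPochhammer ℝ n).eval a / r ^ n := by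
  simp_rw [integral_gammaMeasure ha hr, gammaPDFReal_mul_pow ha hr, integral_const_mul,
    integral_gammaPDFReal (by positivity : 0 < a + n) hr, mul_one]

variable {k θ : ℝ}

lemma memLp_mul_one_sub_gammaMeasure (hk : 0 < k) (hθ : 0 < θ) :
    MemLp (fun x ↦ x * (1 - x)) 2 (gammaMeasure k θ⁻¹) := by
  have hint := integrable_pow_gammaMeasure hk (inv_pos.2 hθ)
  rw [memLp_two_iff_integrable_sq (by fun_prop)]
  have : (fun x : ℝ ↦ (x * (1 - x)) ^ 2) = fun x ↦ x ^ 2 - 2 * x ^ 3 + x ^ 4 := by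
    ext x; ring
  rw [this]
  exact ((hint 2).sub ((hint 3).const_mul 2)).add (hint 4)

lemma integral_mul_one_sub_gammaMeasure (hk : 0 < k) (hθ : 0 < θ) :
    ∫ x, x * (1 - x) ∂gammaMeasure k θ⁻¹ = k * θ * (1 - (k + 1) * θ) := by
  have hint := integrable_pow_gammaMeasure hk (inv_pos.2 hθ)
  have hmom := integral_pow_gammaMeasure hk (inv_pos.2 hθ)
  have : (fun x : ℝ ↦ x * (1 - x)) = fun x ↦ x ^ 1 - x ^ 2 := by
    ext x; ring
  rw [this, integral_sub (hint 1) (hint 2), hmom, hmom]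
  simp [ascPochhammer_succ_eval]
  ring

lemma integral_mul_one_sub_sq_gammaMeasure (hk : 0 < k) (hθ : 0 < θ) :
    ∫ x, (x * (1 - x)) ^ 2 ∂gammaMeasure k θ⁻¹
      = k * (k + 1) * θ ^ 2 * (1 - 2 * (k + 2) * θ + (k + 2) * (k + 3) * θ ^ 2) := by
  have hint := integrable_pow_gammaMeasure hk (inv_pos.2 hθ)
  have hmom := integral_pow_gammaMeasure hk (inv_pos.2 hθ)
  have : (fun x : ℝ ↦ (x * (1 - x)) ^ 2) = fun x ↦ x ^ 2 - 2 * x ^ 3 + x ^ 4 := by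
    ext x; ring
  have hint23 : Integrable (fun x : ℝ ↦ x ^ 2 - 2 * x ^ 3) (gammaMeasure k θ⁻¹) :=
    (hint 2).sub ((hint 3).const_mul 2)
  rw [this, integral_add hint23 (hint 4), integral_sub (hint 2) ((hint 3).const_mul 2),
    integral_const_mul, hmom, hmom, hmom]
  simp [ascPochhammer_succ_eval]
  ring

end GammaMoments

section Independence

variable {Ω : Type*} {mΩ : MeasurableSpace Ω} {μ : Measure Ω} {Z ε : Ω → ℝ}

lemma IndepFun.memLp_two_mul (h : IndepFun Z ε μ) (hZ : MemLp Z 2 μ) (hε : MemLp ε 2 μ) :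
    MemLp (Z * ε) 2 μ := by
  rw [memLp_two_iff_integrable_sq (hZ.1.mul hε.1)]
  simp only [Pi.mul_apply, mul_pow]
  exact (h.comp (measurable_id.pow_const 2) (measurable_id.pow_const 2)).integrable_mul
    hZ.integrable_sq hε.integrable_sq

lemma IndepFun.variance_mul [IsProbabilityMeasure μ] (h : IndepFun Z ε μ) (hZ : MemLp Z 2 μ)
    (hε : MemLp ε 2 μ) :
    variance (Z * ε) μ
      = (∫ ω, Z ω ^ 2 ∂μ) * (∫ ω, ε ω ^ 2 ∂μ) - (∫ ω, Z ω ∂μ) ^ 2 * (∫ ω, ε ω ∂μ) ^ 2 := by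
  have hsq : ∫ ω, Z ω ^ 2 * ε ω ^ 2 ∂μ = (∫ ω, Z ω ^ 2 ∂μ) * ∫ ω, ε ω ^ 2 ∂μ :=
    (h.comp (measurable_id.pow_const 2) (measurable_id.pow_const 2))
      |>.integral_mul_eq_mul_integral (hZ.1.pow 2) (hε.1.pow 2)
  rw [variance_eq_sub (h.memLp_two_mul hZ hε), h.integral_mul_eq_mul_integral hZ.1 hε.1]
  simp only [Pi.pow_apply, Pi.mul_apply, mul_pow, hsq]

end Independence

end ProbabilityTheory

lemma logistic_growth_rate_sq_eq {k θ r v : ℝ} (hk : 0 < k) (hθ : 0 < θ)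
    (hmean : r * (k * θ * (1 - (k + 1) * θ)) = k * θ)
    (hvar : r ^ 2 * (k * (k + 1) * θ ^ 2 * (1 - 2 * (k + 2) * θ + (k + 2) * (k + 3) * θ ^ 2)
      * (v + 1) - (k * θ * (1 - (k + 1) * θ)) ^ 2) = k * θ ^ 2) :
    ((k + 3) * r - (2 * k + 4)) ^ 2 * (v + 1) = (k + 1) ^ 2 * (1 - v * (k + 2)) := by
  have hθr : (k + 1) * θ * r = r - 1 :=
    mul_left_cancel₀ (by positivity : k * θ ≠ 0) (by linear_combination -hmean)
  have hvar' : r ^ 2 * (v + 1) * (1 - 2 * (k + 2) * θ + (k + 2) * (k + 3) * θ ^ 2) = 1 := by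
    refine mul_left_cancel₀ (by positivity : k * (k + 1) * θ ^ 2 ≠ 0) ?_
    linear_combination hvar - k * θ * (k * θ * (r * (1 - (k + 1) * θ)) + k * θ) * hθr
  -- substitute `(k + 1) θ r = r - 1` into `(k + 1)² · hvar'`
  have hquad : (v + 1) * ((k + 3) * r ^ 2 - 4 * (k + 2) * r + (k + 2) * (k + 3)) = (k + 1) ^ 2 := by
    linear_combination (k + 1) ^ 2 * hvar'
      + (v + 1) * (k + 2) * ((k - 1) * r + (k + 3) - (k + 3) * (k + 1) * θ * r) * hθr
  linear_combination (k + 3) * hquad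

lemma eq_add_or_eq_sub_of_sq_mul_eq {b c d u w r : ℝ} (hc : c ≠ 0) (hw : 0 < w)
    (h : (c * r - b) ^ 2 * w = d ^ 2 * u) :
    r = (b + d * √(u / w)) / c ∨ r = (b - d * √(u / w)) / c := by
  have hsq : (c * r - b) ^ 2 = d ^ 2 * (u / w) := by
    field_simp; linear_combination h
  rcases le_or_gt 0 (u / w) with hs | hs
  · rw [← sq_sqrt hs, ← mul_pow] at hsq
    rcases sq_eq_sq_iff_eq_or_eq_neg.mp hsq with h' | h'
    · left; field_simp; linarith
    · right; field_simp; linarith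
  · have : c * r - b = 0 := by nlinarith [sq_nonneg (c * r - b), sq_nonneg d]
    left
    -- `√` vanishes on negatives, where `h` forces `c * r = b`
    rw [sqrt_eq_zero'.2 hs.le, eq_div_iff hc]
    linarith

theorem stmt6_general {Ω : Type*} {mΩ : MeasurableSpace Ω} (μ : Measure Ω) [IsProbabilityMeasure μ]
    (k θ r v : ℝ) (hk : 0 < k) (hθ : 0 < θ)
    (X ε : Ω → ℝ) (hXm : Measurable X)
    (hX : Measure.map X μ = gammaMeasure k θ⁻¹)
    (hε : MemLp ε 2 μ) (hindep : IndepFun ε X μ)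
    (hεmean : ∫ ω, ε ω ∂μ = 1) (hεvar : variance ε μ = v)
    (Y : Ω → ℝ) (hY : Y = fun ω => r * X ω * (1 - X ω) * ε ω)
    (hmean₁ : ∫ ω, Y ω ∂μ = ∫ ω, X ω ∂μ) (hmean₂ : ∫ ω, X ω ∂μ = k * θ)
    (hvar₁ : variance Y μ = variance X μ) (hvar₂ : variance X μ = k * θ ^ 2) :
    r = (2 * k + 4 + (k + 1) * Real.sqrt ((1 - v * (k + 2)) / (v + 1))) / (k + 3) ∨
      r = (2 * k + 4 - (k + 1) * Real.sqrt ((1 - v * (k + 2)) / (v + 1))) / (k + 3) := by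
  set g : ℝ → ℝ := fun x ↦ x * (1 - x)
  have hg : Measurable g := by fun_prop
  have hgX : MemLp (g ∘ X) 2 μ := by
    rw [← memLp_map_measure_iff hg.aestronglyMeasurable hXm.aemeasurable, hX]
    exact memLp_mul_one_sub_gammaMeasure hk hθ
  have hEgX : ∫ ω, g (X ω) ∂μ = k * θ * (1 - (k + 1) * θ) := by
    rw [← integral_map hXm.aemeasurable hg.aestronglyMeasurable, hX]
    exact integral_mul_one_sub_gammaMeasure hk hθ
  have hEgX2 : ∫ ω, g (X ω) ^ 2 ∂μ
      = k * (k + 1) * θ ^ 2 * (1 - 2 * (k + 2) * θ + (k + 2) * (k + 3) * θ ^ 2) := by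
    rw [← integral_map (f := fun x ↦ g x ^ 2) hXm.aemeasurable (by fun_prop), hX]
    exact integral_mul_one_sub_sq_gammaMeasure hk hθ
  have hεsq : ∫ ω, ε ω ^ 2 ∂μ = v + 1 := by
    have := variance_eq_sub hε
    simp only [hεvar, hεmean, Pi.pow_apply] at this
    linarith
  have hind : IndepFun (g ∘ X) ε μ := (hindep.comp measurable_id hg).symm
  have hYgX : Y = fun ω ↦ r * ((g ∘ X) * ε) ω := by
    rw [hY]; ext ω; simp only [g, Pi.mul_apply, Function.comp_apply]; ring
  have hEY := hmean₁.trans hmean₂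
  rw [hYgX, integral_const_mul, hind.integral_mul_eq_mul_integral hgX.1 hε.1] at hEY
  simp only [Function.comp_apply, hEgX, hεmean, mul_one] at hEY
  have hVY := hvar₁.trans hvar₂
  rw [hYgX, variance_const_mul, hind.variance_mul hgX hε] at hVY
  simp only [Function.comp_apply, hEgX, hEgX2, hεsq, hεmean, one_pow, mul_one] at hVY
  have hv : 0 < v + 1 := by linarith [hεvar ▸ variance_nonneg ε μ]
  exact eq_add_or_eq_sub_of_sq_mul_eq (by positivity) hv
    (logistic_growth_rate_sq_eq hk hθ hEY hVY)

/-- Equilibrium growth rates of the stochastic logistic equation: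
Let `k, θ, r > 0`, `X ~ Gamma(k, θ)` (rate `1/θ`), `ε` square-integrable, independent of `X`,
with `E[ε] = 1` and `Var(ε) = v`, and set `Y = r·X·(1−X)·ε`. If `E[Y] = E[X] = kθ` and
`Var(Y) = Var(X) = kθ²`, then `r = (2k + 4 ± (k + 1)·√((1 − v(k + 2))/(v + 1)))/(k + 3)`. -/
theorem stmt6 {Ω : Type*} {mΩ : MeasurableSpace Ω} (μ : Measure Ω) [IsProbabilityMeasure μ]
    (k θ r v : ℝ) (hk : 0 < k) (hθ : 0 < θ) (hr : 0 < r)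
    (X ε : Ω → ℝ) (hXm : Measurable X)
    (hX : Measure.map X μ = gammaMeasure k θ⁻¹)
    (hε : MemLp ε 2 μ) (hindep : IndepFun ε X μ)
    (hεmean : ∫ ω, ε ω ∂μ = 1) (hεvar : variance ε μ = v)
    (Y : Ω → ℝ) (hY : Y = fun ω => r * X ω * (1 - X ω) * ε ω)
    (hmean₁ : ∫ ω, Y ω ∂μ = ∫ ω, X ω ∂μ) (hmean₂ : ∫ ω, X ω ∂μ = k * θ)
    (hvar₁ : variance Y μ = variance X μ) (hvar₂ : variance X μ = k * θ ^ 2) :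
    r = (2 * k + 4 + (k + 1) * Real.sqrt ((1 - v * (k + 2)) / (v + 1))) / (k + 3) ∨
      r = (2 * k + 4 - (k + 1) * Real.sqrt ((1 - v * (k + 2)) / (v + 1))) / (k + 3) :=
  stmt6_general (mΩ := mΩ) μ k θ r v hk hθ X ε hXm hX hε hindep hεmean hεvar Y hY hmean₁ hmean₂
    hvar₁ hvar₂
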